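/- Let m ≥ |q| and v_t as in (RN-velocity). Then V_t(x) := v_t(x)·(e^{−2t} + m/|x| + e^{2t}(m²−q²)/(4|x|²))^{1/2} satisfies the linear equation Δ V_t = (3/4) Ũ_t^{−4} |E_δ|² V_t on ℝ³ \ {0}, where Ũ_t² = e^{−2t} + m/|x| + e^{2t}(m²−q²)/(4|x|²) and |E_δ|² = q²/|x|⁴. -/

import Mathlib

/-!
Put `a = e^{-2t}`, `b = e^{2t}(m² - q²)/4` and `Q(s) = a s² + m s + b`, so that `Ũ_t = √Q / s`
and `s V_t = f := (b - a s²) / √Q`. For radial functions `Δ V = (s V)'' / s`, so the equation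
becomes the ordinary differential equation `f'' = (3/4) q² Q⁻² f`. Differentiating twice,
`f'' = (3/4) (Q'² - 4 a Q) Q^{-5/2} (b - a s²)`, and `Q'² - 4 a Q` is the discriminant
`m² - 4 a b = q²` of `Q`.
-/

noncomputable def rnUt (m q t : ℝ) (s : ℝ) : ℝ :=
  Real.sqrt (Real.exp (-2*t) + m / s + Real.exp (2*t) * (m^2 - q^2) / (4 * s^2))

noncomputable def rnVel (m q t : ℝ) (s : ℝ) : ℝ :=
  (-Real.exp (-2*t) + Real.exp (2*t) * (m^2 - q^2) / (4 * s^2)) /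
  (Real.exp (-2*t) + m / s + Real.exp (2*t) * (m^2 - q^2) / (4 * s^2))

open Filter Topology

noncomputable def radialLaplacian (V : ℝ → ℝ) (s : ℝ) : ℝ :=
  deriv (deriv V) s + (2 / s) * deriv V s

theorem radialLaplacian_eq_of_eq_div {V f f' : ℝ → ℝ} {f'' s : ℝ} (hs : 0 < s)
    (hV : ∀ x, 0 < x → V x = f x / x) (hf : ∀ x, 0 < x → HasDerivAt f (f' x) x)
    (hf' : HasDerivAt f' f'' s) :
    radialLaplacian V s = f'' / s := by
  have hderiv : ∀ x, 0 < x → deriv V x = (f' x * x - f x) / x ^ 2 := by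
    intro x hx
    have hVx : V =ᶠ[𝓝 x] fun y => f y / y := eventuallyEq_of_mem (Ioi_mem_nhds hx) hV
    have h : HasDerivAt (fun y => f y / y) ((f' x * x - f x * 1) / x ^ 2) x :=
      (hf x hx).div (hasDerivAt_id' x) hx.ne'
    rw [hVx.deriv_eq, h.deriv, mul_one]
  have h2 : HasDerivAt (fun y => (f' y * y - f y) / y ^ 2)
      ((f'' * s ^ 3 - 2 * s * (f' s * s - f s)) / s ^ 4) s := by
    refine (((hf'.mul (hasDerivAt_id' s)).sub (hf s hs)).div
      ((hasDerivAt_id' s).pow 2) (pow_ne_zero 2 hs.ne')).congr_deriv ?_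
    norm_num
    ring
  rw [radialLaplacian, (eventuallyEq_of_mem (Ioi_mem_nhds hs) hderiv).deriv_eq, h2.deriv,
    hderiv s hs]
  field_simp
  ring

theorem HasDerivAt.div_sqrt_pow {g Q : ℝ → ℝ} {g' Q' x : ℝ} (k : ℕ) (hg : HasDerivAt g g' x)
    (hQ : HasDerivAt Q Q' x) (hQx : 0 < Q x) :
    HasDerivAt (fun y => g y / √(Q y) ^ k)
      ((g' * Q x - k / 2 * g x * Q') / √(Q x) ^ (k + 2)) x := by
  have hu : 0 < √(Q x) := Real.sqrt_pos.mpr hQx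
  refine (hg.div ((hQ.sqrt hQx.ne').pow k) (pow_ne_zero k hu.ne')).congr_deriv ?_
  have hQu := Real.sq_sqrt hQx.le
  set u := √(Q x)
  rw [← hQu]
  rcases k with _ | k
  · norm_num
    field_simp
  · simp only [Pi.pow_apply, Nat.add_sub_cancel]
    push_cast
    field_simp
    ring

section Quadratic

variable (a b m : ℝ)

theorem hasDerivAt_quadratic (x : ℝ) :
    HasDerivAt (fun y => a * y ^ 2 + m * y + b) (2 * a * x + m) x := by
  refine ((((hasDerivAt_pow 2 x).const_mul a).add
    ((hasDerivAt_id' x).const_mul m)).add_const b).congr_deriv ?_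
  norm_num
  ring

theorem hasDerivAt_div_sqrt_quadratic {x : ℝ} (hQ : 0 < a * x ^ 2 + m * x + b) :
    HasDerivAt (fun y => (b - a * y ^ 2) / √(a * y ^ 2 + m * y + b))
      ((-a ^ 2 * x ^ 3 - 3 / 2 * a * m * x ^ 2 - 3 * a * b * x - b * m / 2)
        / √(a * x ^ 2 + m * x + b) ^ 3) x := by
  have hg : HasDerivAt (fun y => b - a * y ^ 2) (-(2 * a * x)) x := by
    refine (((hasDerivAt_pow 2 x).const_mul a).const_sub b).congr_deriv ?_
    norm_num
    ring
  have h := hg.div_sqrt_pow 1 (hasDerivAt_quadratic a b m x) hQ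
  simp only [pow_one] at h
  refine h.congr_deriv ?_
  norm_num
  ring

theorem hasDerivAt_deriv_div_sqrt_quadratic {q x : ℝ} (hab : 4 * a * b = m ^ 2 - q ^ 2)
    (hQ : 0 < a * x ^ 2 + m * x + b) :
    HasDerivAt (fun y => (-a ^ 2 * y ^ 3 - 3 / 2 * a * m * y ^ 2 - 3 * a * b * y - b * m / 2)
        / √(a * y ^ 2 + m * y + b) ^ 3)
      (3 / 4 * q ^ 2 * (b - a * x ^ 2) / √(a * x ^ 2 + m * x + b) ^ 5) x := by
  have hN : HasDerivAt (fun y => -a ^ 2 * y ^ 3 - 3 / 2 * a * m * y ^ 2 - 3 * a * b * y - b * m / 2)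
      (-3 * a ^ 2 * x ^ 2 - 3 * a * m * x - 3 * a * b) x := by
    refine ((((hasDerivAt_pow 3 x).const_mul (-a ^ 2)).sub
      ((hasDerivAt_pow 2 x).const_mul (3 / 2 * a * m))).sub
      ((hasDerivAt_id' x).const_mul (3 * a * b))).sub_const (b * m / 2) |>.congr_deriv ?_
    norm_num
    ring
  refine (hN.div_sqrt_pow 3 (hasDerivAt_quadratic a b m x) hQ).congr_deriv ?_
  norm_num
  congr 1
  linear_combination (-3 / 4 * (b - a * x ^ 2)) * hab

end Quadratic

theorem rnUt_eq_sqrt_div (m q t : ℝ) {s : ℝ} (hs : 0 < s) :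
    rnUt m q t s =
      √(Real.exp (-2 * t) * s ^ 2 + m * s + Real.exp (2 * t) * (m ^ 2 - q ^ 2) / 4) / s := by
  rw [rnUt, ← Real.sqrt_sq hs.le, ← Real.sqrt_div' _ (sq_nonneg s), Real.sqrt_sq hs.le]
  congr 1
  field_simp

theorem rnVel_eq_div (m q t : ℝ) {s : ℝ} (hs : s ≠ 0) :
    rnVel m q t s =
      (Real.exp (2 * t) * (m ^ 2 - q ^ 2) / 4 - Real.exp (-2 * t) * s ^ 2)
        / (Real.exp (-2 * t) * s ^ 2 + m * s + Real.exp (2 * t) * (m ^ 2 - q ^ 2) / 4) := by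
  rw [rnVel, ← mul_div_mul_right _ _ (pow_ne_zero 2 hs)]
  congr 1
  · field_simp
    ring
  · field_simp

theorem rnQuadratic_pos (t : ℝ) {m q x : ℝ} (hmq : |q| ≤ m) (hx : 0 < x) :
    0 < Real.exp (-2 * t) * x ^ 2 + m * x + Real.exp (2 * t) * (m ^ 2 - q ^ 2) / 4 := by
  have hm : 0 ≤ m := (abs_nonneg q).trans hmq
  have hqm : 0 ≤ m ^ 2 - q ^ 2 := sub_nonneg.mpr (sq_le_sq.mpr (hmq.trans (le_abs_self m)))
  positivity

/-- `V_t = v_t Ũ_t` satisfies the linearized Lichnerowicz equation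
`Δ V = (3/4) Ũ_t⁻⁴ |E_δ|² V` with `|E_δ|² = q²/s⁴`, where `Δ` is the
Euclidean Laplacian acting on radial functions, `ΔV = V'' + (2/s)V'`. -/
theorem rn_velocity_solves_linearized (m q t : ℝ) (hmq : |q| ≤ m) :
    let V : ℝ → ℝ := fun s => rnVel m q t s * rnUt m q t s
    ∀ s : ℝ, 0 < s →
      deriv (deriv V) s + (2 / s) * deriv V s
        = (3/4) * (rnUt m q t s)⁻¹ ^ 4 * (q^2 / s^4) * V s := by
  intro V s hs
  have hUt := fun x (hx : 0 < x) => rnUt_eq_sqrt_div m q t hx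
  have hvel := fun x (hx : 0 < x) => rnVel_eq_div m q t hx.ne'
  have hQ := fun x (hx : 0 < x) => rnQuadratic_pos t hmq hx
  set a := Real.exp (-2 * t)
  set b := Real.exp (2 * t) * (m ^ 2 - q ^ 2) / 4
  have hab : 4 * a * b = m ^ 2 - q ^ 2 := by
    rw [show 4 * a * b = Real.exp (-2 * t) * Real.exp (2 * t) * (m ^ 2 - q ^ 2) by ring,
      ← Real.exp_add]
    simp
  have hV : ∀ x, 0 < x → V x = (b - a * x ^ 2) / √(a * x ^ 2 + m * x + b) / x := by
    intro x hx
    show rnVel m q t x * rnUt m q t x = _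
    rw [hvel x hx, hUt x hx]
    linear_combination (b - a * x ^ 2) / x * Real.sqrt_div_self'
  change radialLaplacian V s = _
  rw [radialLaplacian_eq_of_eq_div hs hV
    (fun x hx => hasDerivAt_div_sqrt_quadratic a b m (hQ x hx))
    (hasDerivAt_deriv_div_sqrt_quadratic a b m hab (hQ s hs)), hUt s hs, hV s hs]
  field_simp
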